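/- arXiv:2010.08752 — 2 statements merged into one kernel-verified Lean document; each statement's English description precedes it below -/
import Mathlib

section
/- Let p ∈ L^∞(ℝⁿ) and let G = { e ∈ ℝⁿ : p(x+e) = p(x) for a.e. x ∈ ℝⁿ } be its group of periods. Suppose there is a sequence h_k ∈ G with h_k ≠ 0, h_k → 0, and h_k/|h_k| → ξ with |ξ| = 1. Then for every α ∈ ℝ one has p(x + αξ) = p(x) for a.e. x ∈ ℝⁿ; that is, the whole line ℝξ is contained in G. -/
/-! Periods of `p` form an additive subgroup, and for locally integrable `p` it is closed: `e` is a
period iff `∫ g(x) p(x + e) dx = ∫ g(x) p(x) dx` for every test function `g`, and the left side is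
the convolution of `p` with `g(-·)`, hence continuous in `e`. The periods `⌊α / |h_k|⌋ h_k` lie
within `|h_k|` of `α h_k / |h_k|`, so they converge to `αξ`, which is therefore a period. -/

open MeasureTheory Filter Metric Set
open scoped Topology ENNReal

noncomputable section

/-- Euclidean space ℝⁿ. -/
abbrev Euc (n : ℕ) := EuclideanSpace ℝ (Fin n)

/-- Group of periods of a function `p ∈ L^∞(ℝⁿ)`:
`G = { e | p(x+e) = p(x) a.e. }`. -/
def periodGroup {n : ℕ} (p : Euc n → ℝ) : Set (Euc n) :=
  {e | ∀ᵐ x : Euc n, p (x + e) = p x}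

/-- `p` is periodic: the linear hull of its group of periods is all of ℝⁿ. -/
def IsPeriodicFun {n : ℕ} (p : Euc n → ℝ) : Prop :=
  Submodule.span ℝ (periodGroup p) = ⊤

/-- Dual group `G' = { ξ | ξ·e ∈ ℤ for all e ∈ G }`. -/
def dualGroup {n : ℕ} (G : Set (Euc n)) : Set (Euc n) :=
  {ξ | ∀ e ∈ G, ∃ k : ℤ, (inner ℝ ξ e : ℝ) = (k : ℝ)}

/-- `p` has mean value `m` (the mean over the period cell, characterized by
the limit of averages over large balls). -/
def HasMeanValue {n : ℕ} (p : Euc n → ℝ) (m : ℝ) : Prop :=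
  Tendsto (fun R : ℝ =>
      (∫ x in ball (0 : Euc n) R, p x) / (volume (ball (0 : Euc n) R)).toReal)
    atTop (𝓝 m)

/-- `v` vanishes at infinity in the sense of measure: for every `λ > 0`
the superlevel set `{ |v| > λ }` has finite Lebesgue measure. -/
def Vanishes {n : ℕ} (v : Euc n → ℝ) : Prop :=
  ∀ lam : ℝ, 0 < lam → volume {x : Euc n | lam < |v x|} < ⊤

/-- `g` is affine on the set `S`. -/
def AffineOn (g : ℝ → ℝ) (S : Set ℝ) : Prop :=
  ∃ a b : ℝ, ∀ u ∈ S, g u = a * u + b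

/-- The set `F`: points `u` such that for every nonzero `ξ ∈ G'` the function
`w ↦ φ(w)·ξ` is not affine on any neighborhood of `u`; in the degenerate case
`G' = {0}`, the points where the whole vector `φ` is not affine near `u`. -/
def Fset {n : ℕ} (φ : ℝ → Euc n) (G : Set (Euc n)) : Set ℝ :=
  {u | (∀ ξ ∈ dualGroup G, ξ ≠ 0 → ∀ ε > (0:ℝ),
          ¬ AffineOn (fun w => (inner ℝ (φ w) ξ : ℝ)) (Ioo (u - ε) (u + ε)))
    ∧ (dualGroup G = {0} → ∀ ε > (0:ℝ),
          ¬ ∃ a b : Euc n, ∀ w ∈ Ioo (u - ε) (u + ε), φ w = w • a + b)}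

/-- The shift-invariant norm `‖v‖_X = sup_y ∫_{|x-y|<1} |v(x)| dx`. -/
def normX {n : ℕ} (v : Euc n → ℝ) : ℝ :=
  ⨆ y : Euc n, ∫ x in ball y 1, |v x|

/-- Kruzhkov entropy solution of `u_t + div_x φ(u) = 0`, `u(0,·) = u₀`. -/
def IsEntropySol {n : ℕ} (φ : ℝ → Euc n) (u₀ : Euc n → ℝ) (u : ℝ → Euc n → ℝ) : Prop :=
  Measurable (Function.uncurry u) ∧ (∃ C : ℝ, ∀ t x, |u t x| ≤ C) ∧
  (∀ k : ℝ, ∀ f : ℝ × Euc n → ℝ, ContDiff ℝ 1 f → HasCompactSupport f →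
    (∀ z, 0 ≤ f z) → (∀ z : ℝ × Euc n, z.1 ≤ 0 → f z = 0) →
    0 ≤ ∫ z : ℝ × Euc n,
      (|u z.1 z.2 - k| * fderiv ℝ f z (1, 0)
        + Real.sign (u z.1 z.2 - k) *
            ∑ i, (φ (u z.1 z.2) i - φ k i) * fderiv ℝ f z (0, EuclideanSpace.single i 1))) ∧
  (∀ K : Set (Euc n), IsCompact K →
    Tendsto (fun t => ∫ x in K, |u t x - u₀ x|)
      ((𝓝[>] (0:ℝ)) ⊓ ae (volume : Measure ℝ)) (𝓝 0))

open scoped Convolution ContDiff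

namespace MeasureTheory

variable {E F : Type*} [NormedAddCommGroup E] [MeasurableSpace E] [BorelSpace E]
  {μ : Measure E} [μ.IsAddRightInvariant] {p : E → F}

variable (μ p) in
def periodAddSubgroup : AddSubgroup E where
  carrier := {e | ∀ᵐ x ∂μ, p (x + e) = p x}
  zero_mem' := by simp
  add_mem' {e f} he hf := by
    filter_upwards [he, (measurePreserving_add_right μ e).quasiMeasurePreserving.ae hf]
      with x hxe hxf
    rwa [← add_assoc, hxf]
  neg_mem' {e} he := by
    filter_upwards [(measurePreserving_add_right μ (-e)).quasiMeasurePreserving.ae he] with x hx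
    simpa using hx.symm

theorem mem_periodAddSubgroup {e : E} :
    e ∈ periodAddSubgroup μ p ↔ ∀ᵐ x ∂μ, p (x + e) = p x :=
  Iff.rfl

variable [NormedAddCommGroup F]

theorem LocallyIntegrable.comp_add_right (hp : LocallyIntegrable p μ) (e : E) :
    LocallyIntegrable (fun x => p (x + e)) μ :=
  (locallyIntegrable_map_homeomorph (Homeomorph.addRight e)).1
    (by rwa [Homeomorph.coe_addRight, map_add_right_eq_self])

variable [NormedSpace ℝ F]

theorem continuous_integral_smul_comp_add [μ.IsAddLeftInvariant] [μ.IsNegInvariant]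
    (hp : LocallyIntegrable p μ) {g : E → ℝ} (hg : Continuous g) (hgc : HasCompactSupport g) :
    Continuous fun e => ∫ x, g x • p (x + e) ∂μ := by
  have hconv : Continuous (p ⋆[(ContinuousLinearMap.lsmul ℝ ℝ).flip, μ] fun x => g (-x)) :=
    (hgc.comp_isClosedEmbedding (Homeomorph.neg E).isClosedEmbedding).continuous_convolution_right
      _ hp (hg.comp continuous_neg)
  convert hconv using 2 with e
  rw [convolution_def, ← integral_sub_right_eq_self _ e]
  simp

variable [NormedSpace ℝ E] [FiniteDimensional ℝ E] [CompleteSpace F]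

theorem mem_periodAddSubgroup_iff_integral_smul (hp : LocallyIntegrable p μ) {e : E} :
    e ∈ periodAddSubgroup μ p ↔ ∀ g : E → ℝ, ContDiff ℝ ∞ g → HasCompactSupport g →
      ∫ x, g x • p (x + e) ∂μ = ∫ x, g x • p x ∂μ :=
  ⟨fun he g _ _ => integral_congr_ae <| (mem_periodAddSubgroup.1 he).mono fun x hx =>
      congrArg (g x • ·) hx,
    ae_eq_of_integral_contDiff_smul_eq (hp.comp_add_right e) hp⟩

theorem isClosed_periodAddSubgroup [μ.IsAddLeftInvariant] [μ.IsNegInvariant]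
    (hp : LocallyIntegrable p μ) : IsClosed (periodAddSubgroup μ p : Set E) := by
  have hweak : (periodAddSubgroup μ p : Set E) = ⋂ (g : E → ℝ) (_ : ContDiff ℝ ∞ g)
      (_ : HasCompactSupport g), {e | ∫ x, g x • p (x + e) ∂μ = ∫ x, g x • p x ∂μ} := by
    ext e
    simp only [SetLike.mem_coe, mem_periodAddSubgroup_iff_integral_smul hp, mem_iInter, mem_ofPred_eq]
  rw [hweak]
  exact isClosed_iInter fun g => isClosed_iInter fun hg => isClosed_iInter fun hgc =>
    isClosed_eq (continuous_integral_smul_comp_add hp hg.continuous hgc) continuous_const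

end MeasureTheory

section LineOfPeriods

variable {E : Type*} [NormedAddCommGroup E] [NormedSpace ℝ E]

theorem norm_floor_smul_sub_smul_le (α : ℝ) (v : E) :
    ‖(⌊α / ‖v‖⌋ : ℝ) • v - α • ‖v‖⁻¹ • v‖ ≤ ‖v‖ := by
  rw [smul_smul, ← div_eq_mul_inv, ← sub_smul, norm_smul, ← neg_sub, Int.self_sub_floor,
    norm_neg, Real.norm_of_nonneg (Int.fract_nonneg _)]
  exact mul_le_of_le_one_left (norm_nonneg v) (Int.fract_lt_one _).le

theorem AddSubgroup.smul_mem_of_tendsto_direction {H : AddSubgroup E} (hH : IsClosed (H : Set E))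
    {ι : Type*} {l : Filter ι} [l.NeBot] {h : ι → E} (hmem : ∀ k, h k ∈ H)
    (hlim : Tendsto h l (𝓝 0)) {ξ : E} (hdir : Tendsto (fun k => ‖h k‖⁻¹ • h k) l (𝓝 ξ))
    (α : ℝ) : α • ξ ∈ H := by
  set v : ι → E := fun k => (⌊α / ‖h k‖⌋ : ℝ) • h k
  have hvH : ∀ k, v k ∈ H := fun k => by
    simpa only [v, Int.cast_smul_eq_zsmul] using H.zsmul_mem (hmem k) _
  have hclose : Tendsto (fun k => v k - α • ‖h k‖⁻¹ • h k) l (𝓝 0) :=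
    squeeze_zero_norm (fun k => norm_floor_smul_sub_smul_le α (h k)) (by simpa using hlim.norm)
  have hv : Tendsto v l (𝓝 (α • ξ)) := by
    simpa using hclose.add (hdir.const_smul α)
  exact hH.mem_of_tendsto hv (Eventually.of_forall hvH)

end LineOfPeriods

theorem line_of_periods_general
    {n : ℕ} (p : Euc n → ℝ)
    (hpm : Measurable p) (hpb : ∃ C : ℝ, ∀ x, |p x| ≤ C)
    (h : ℕ → Euc n)
    (hhG : ∀ k, h k ∈ periodGroup p)
    (hlim : Tendsto h atTop (𝓝 0))
    (ξ : Euc n)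
    (hdir : Tendsto (fun k => ‖h k‖⁻¹ • h k) atTop (𝓝 ξ)) :
    ∀ α : ℝ, α • ξ ∈ periodGroup p := by
  obtain ⟨C, hC⟩ := hpb
  have hp : LocallyIntegrable p volume :=
    (memLp_top_of_bound hpm.aestronglyMeasurable C (ae_of_all _ hC)).locallyIntegrable le_top
  exact AddSubgroup.smul_mem_of_tendsto_direction (isClosed_periodAddSubgroup hp) hhG hlim hdir

/-- key step of Lemma 1(i) of the paper: if nonzero periods
`h_k → 0` of `p ∈ L^∞(ℝⁿ)` have directions `h_k/|h_k|` converging to a unit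
vector `ξ`, then the whole line `ℝξ` consists of periods of `p`. -/
theorem line_of_periods
    {n : ℕ} (p : Euc n → ℝ)
    (hpm : Measurable p) (hpb : ∃ C : ℝ, ∀ x, |p x| ≤ C)
    (h : ℕ → Euc n)
    (hhG : ∀ k, h k ∈ periodGroup p) (hh0 : ∀ k, h k ≠ 0)
    (hlim : Tendsto h atTop (𝓝 0))
    (ξ : Euc n) (hξ : ‖ξ‖ = 1)
    (hdir : Tendsto (fun k => ‖h k‖⁻¹ • h k) atTop (𝓝 ξ)) :
    ∀ α : ℝ, α • ξ ∈ periodGroup p :=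
  line_of_periods_general p hpm hpb h hhG hlim ξ hdir

end
end

section
/- Let G ⊂ ℝⁿ be the group of periods of a periodic function, ξ ∈ G' nonzero with ξ(G) = rℤ (r ∈ ℕ), e₀ ∈ G with ξ·e₀ = r, E = ker ξ, and G₁ = E ∩ G. Let v ∈ C(E) be periodic with group of periods exactly G₁ and with zero mean value, let m ∈ ℝ, δ > 0, and define u₀(x) = m + v(pr(x)) + (δ/2) sin(2π ξ·x / r), where pr(x) ∈ E is the projection of x onto E along the vector e₀ (i.e. x − pr(x) is parallel to e₀). Then the group of periods of u₀ is exactly G = G₁ + ℤe₀, and the mean value of u₀ equals m. -/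
open MeasureTheory Filter Metric Set
open scoped Topology ENNReal

noncomputable section

/-!
Since `u₀` is continuous, its a.e. periods are genuine periods. Along `e₀` the function `w` is
constant while the phase `2π ξ·x / r` of the sine sweeps through all of `ℝ`, so `u₀(x + e) = u₀(x)`
can be tested at the phases `±π/2`: adding and subtracting the two identities shows that `e` is
a period of `w` and that `ξ·e ∈ rℤ`, which cuts `G₁ + ℝe₀` down to `G₁ + ℤe₀`, and this is `G`
because `ξ(G) = rℤ`. The sine term is odd, so its integral over every centred ball vanishes and
it does not contribute to the mean value.
-/

open Real
open scoped RealInnerProductSpace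

section PeriodGroup

variable {n : ℕ}

def periodSubgroup (p : Euc n → ℝ) : AddSubgroup (Euc n) where
  carrier := periodGroup p
  zero_mem' := by simp [periodGroup]
  add_mem' {a b} ha hb := by
    change ∀ᵐ x : Euc n, p (x + a) = p x at ha
    change ∀ᵐ x : Euc n, p (x + b) = p x at hb
    change ∀ᵐ x : Euc n, p (x + (a + b)) = p x
    have ha' : ∀ᵐ x : Euc n, p (x + b + a) = p (x + b) :=
      (measurePreserving_add_right volume b).quasiMeasurePreserving.ae ha
    filter_upwards [ha', hb] with x h₁ h₂
    rw [← h₂, ← h₁, add_assoc, add_comm a]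
  neg_mem' {a} ha := by
    change ∀ᵐ x : Euc n, p (x + a) = p x at ha
    change ∀ᵐ x : Euc n, p (x + -a) = p x
    have ha' : ∀ᵐ x : Euc n, p (x + -a + a) = p (x + -a) :=
      (measurePreserving_add_right volume (-a)).quasiMeasurePreserving.ae ha
    filter_upwards [ha'] with x h
    rw [← h, neg_add_cancel_right]

theorem periodGroup_eq_of_continuous {f : Euc n → ℝ} (hf : Continuous f) :
    periodGroup f = {e | ∀ x, f (x + e) = f x} := by
  ext e
  exact (hf.comp (continuous_add_const e)).ae_eq_iff_eq volume hf |>.trans funext_iff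

end PeriodGroup

section MeanValue

variable {n : ℕ}

theorem hasMeanValue_const (m : ℝ) : HasMeanValue (fun _ : Euc n => m) m := by
  refine tendsto_const_nhds.congr' ?_
  filter_upwards [eventually_gt_atTop 0] with R hR
  rw [setIntegral_const, smul_eq_mul, measureReal_def, mul_div_cancel_left₀]
  exact (ENNReal.toReal_pos (measure_ball_pos volume 0 hR).ne' measure_ball_lt_top.ne).ne'

theorem HasMeanValue.add {f g : Euc n → ℝ} {a b : ℝ} (hf : HasMeanValue f a)
    (hg : HasMeanValue g b) (hfi : LocallyIntegrable f) (hgi : LocallyIntegrable g) :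
    HasMeanValue (fun x => f x + g x) (a + b) := by
  refine (Tendsto.add hf hg).congr fun R => ?_
  have hball := isCompact_closedBall (0 : Euc n) R
  rw [integral_add ((hfi.integrableOn_isCompact hball).mono_set ball_subset_closedBall)
    ((hgi.integrableOn_isCompact hball).mono_set ball_subset_closedBall), add_div]

theorem integral_ball_zero_eq_zero_of_odd {f : Euc n → ℝ} (hf : ∀ x, f (-x) = -f x)
    (R : ℝ) : ∫ x in ball (0 : Euc n) R, f x = 0 := by
  have h := (Measure.measurePreserving_neg (volume : Measure (Euc n))).setIntegral_preimage_emb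
    (Homeomorph.neg (Euc n)).measurableEmbedding f (ball 0 R)
  rw [show Neg.neg ⁻¹' ball (0 : Euc n) R = ball 0 R by ext; simp] at h
  simp only [hf, integral_neg] at h
  linarith

theorem hasMeanValue_zero_of_odd {f : Euc n → ℝ} (hf : ∀ x, f (-x) = -f x) :
    HasMeanValue f 0 := by
  simp [HasMeanValue, integral_ball_zero_eq_zero_of_odd hf]

end MeanValue

section SineWave

variable {E : Type*} [NormedAddCommGroup E] [InnerProductSpace ℝ E] {ξ e₀ : E} {c : ℝ}

theorem eq_and_cos_eq_one_of_forall_add_mul_sin {a b c θ : ℝ} (hc : c ≠ 0)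
    (h : ∀ ψ, a + c * sin (ψ + θ) = b + c * sin ψ) : a = b ∧ cos θ = 1 := by
  have h₁ := h (π / 2)
  have h₂ := h (-(π / 2))
  rw [add_comm (π / 2), sin_add_pi_div_two, sin_pi_div_two] at h₁
  rw [neg_add_eq_sub, sin_sub_pi_div_two, sin_neg, sin_pi_div_two] at h₂
  exact ⟨by linarith, mul_left_cancel₀ hc (by linarith)⟩

theorem add_smul_invariant_of_proj_invariant (hc : c ≠ 0) (he₀ : ⟪ξ, e₀⟫ = c)
    {w : E → ℝ} (hw : ∀ x, w (x - (⟪ξ, x⟫ / c) • e₀) = w x) (x : E) (t : ℝ) :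
    w (x + t • e₀) = w x := by
  rw [← hw (x + t • e₀), ← hw x, inner_add_right, inner_smul_right, he₀, add_div,
    mul_div_cancel_right₀ t hc, add_smul]
  congr 1
  abel

theorem forall_add_mul_sin_periodic_iff (hc : c ≠ 0) (he₀ : ⟪ξ, e₀⟫ = c) {w : E → ℝ}
    (hw : ∀ x (t : ℝ), w (x + t • e₀) = w x) (m : ℝ) {δ : ℝ} (hδ : δ ≠ 0) (e : E) :
    (∀ x, m + w (x + e) + δ / 2 * sin (2 * π * ⟪ξ, x + e⟫ / c)
        = m + w x + δ / 2 * sin (2 * π * ⟪ξ, x⟫ / c)) ↔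
      (∀ x, w (x + e) = w x) ∧ ∃ k : ℤ, ⟪ξ, e⟫ = k * c := by
  constructor
  · intro h
    -- moving along `e₀` leaves `w` unchanged but sweeps the phase through all of `ℝ`
    have hshift : ∀ x ψ, w (x + e) + δ / 2 * sin (ψ + 2 * π * ⟪ξ, e⟫ / c)
        = w x + δ / 2 * sin ψ := by
      intro x ψ
      set y := x + ((ψ * c / (2 * π) - ⟪ξ, x⟫) / c) • e₀
      have hphase : 2 * π * ⟪ξ, y⟫ / c = ψ := by
        rw [inner_add_right, inner_smul_right, he₀]
        field_simp
        ring
      have hphase' : 2 * π * ⟪ξ, y + e⟫ / c = ψ + 2 * π * ⟪ξ, e⟫ / c := by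
        rw [inner_add_right, ← hphase]
        ring
      have hwy : w (y + e) = w (x + e) := by rw [add_right_comm, hw]
      have := h y
      rw [hwy, hw, hphase', hphase] at this
      linarith
    have hδ2 : δ / 2 ≠ 0 := by positivity
    refine ⟨fun x => (eq_and_cos_eq_one_of_forall_add_mul_sin hδ2 (hshift x)).1, ?_⟩
    obtain ⟨k, hk⟩ :=
      (cos_eq_one_iff _).1 (eq_and_cos_eq_one_of_forall_add_mul_sin hδ2 (hshift 0)).2
    rw [eq_div_iff hc] at hk
    exact ⟨k, mul_left_cancel₀ two_pi_pos.ne' (by linarith)⟩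
  · rintro ⟨hwe, k, hk⟩ x
    rw [hwe, inner_add_right, hk, show 2 * π * (⟪ξ, x⟫ + k * c) / c
      = 2 * π * ⟪ξ, x⟫ / c + k * (2 * π) by field_simp, sin_add_int_mul_two_pi]

theorem exists_ker_add_real_smul_and_inner_iff (hc : c ≠ 0) (he₀ : ⟪ξ, e₀⟫ = c)
    (S : Set E) (e : E) :
    ((∃ e₁ ∈ S, ⟪ξ, e₁⟫ = 0 ∧ ∃ t : ℝ, e = e₁ + t • e₀) ∧ ∃ k : ℤ, ⟪ξ, e⟫ = k * c) ↔
      ∃ e₁ ∈ S, ⟪ξ, e₁⟫ = 0 ∧ ∃ k : ℤ, e = e₁ + k • e₀ := by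
  constructor
  · rintro ⟨⟨e₁, he₁, hξe₁, t, rfl⟩, k, hk⟩
    have : t = k := by
      rw [inner_add_right, hξe₁, inner_smul_right, he₀, zero_add] at hk
      exact mul_right_cancel₀ hc hk
    exact ⟨e₁, he₁, hξe₁, k, by rw [this, Int.cast_smul_eq_zsmul]⟩
  · rintro ⟨e₁, he₁, hξe₁, k, rfl⟩
    refine ⟨⟨e₁, he₁, hξe₁, k, by rw [Int.cast_smul_eq_zsmul]⟩, k, ?_⟩
    rw [inner_add_right, hξe₁, ← Int.cast_smul_eq_zsmul ℝ, inner_smul_right, he₀, zero_add]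

theorem AddSubgroup.eq_setOf_ker_add_zsmul (G : AddSubgroup E) (he₀G : e₀ ∈ G)
    (he₀ : ⟪ξ, e₀⟫ = c) (hG : ∀ e ∈ G, ∃ k : ℤ, ⟪ξ, e⟫ = c * k) :
    {e | ∃ e₁ ∈ G, ⟪ξ, e₁⟫ = 0 ∧ ∃ k : ℤ, e = e₁ + k • e₀} = G := by
  ext e
  constructor
  · rintro ⟨e₁, he₁, -, k, rfl⟩
    exact G.add_mem he₁ (G.zsmul_mem he₀G k)
  · intro he
    obtain ⟨k, hk⟩ := hG e he
    refine ⟨e - k • e₀, G.sub_mem he (G.zsmul_mem he₀G k), ?_, k,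
      (sub_add_cancel _ _).symm⟩
    rw [inner_sub_right, ← Int.cast_smul_eq_zsmul ℝ, inner_smul_right, he₀, hk]
    ring

end SineWave

theorem counterexample_initial_data_general
    {n : ℕ} (p : Euc n → ℝ)
    (ξ : Euc n)
    (r : ℕ) (hr : 0 < r)
    (hrange : (fun e => (inner ℝ ξ e : ℝ)) '' periodGroup p
      = {s : ℝ | ∃ k : ℤ, s = (r : ℝ) * k})
    (e₀ : Euc n) (he₀ : e₀ ∈ periodGroup p) (he₀r : (inner ℝ ξ e₀ : ℝ) = r)
    (w : Euc n → ℝ) (hw : Continuous w)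
    -- `w = v ∘ pr`: `w` is invariant under the projection onto `E` along `e₀`
    (hwproj : ∀ x : Euc n, w (x - ((inner ℝ ξ x : ℝ) / r) • e₀) = w x)
    -- the group of periods of `w` is exactly `G₁ ⊕ ℝe₀`, i.e. the group of
    -- periods of `v` on `E` is exactly `G₁ = ker ξ ∩ G`
    (hwper : {e : Euc n | ∀ x, w (x + e) = w x}
      = {e : Euc n | ∃ e₁ ∈ periodGroup p,
          (inner ℝ ξ e₁ : ℝ) = 0 ∧ ∃ t : ℝ, e = e₁ + t • e₀})
    -- `v` has zero mean value
    (hwmean : HasMeanValue w 0)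
    (m δ : ℝ) (hδ : 0 < δ) :
    periodGroup (fun x : Euc n =>
        m + w x + δ / 2 * Real.sin (2 * Real.pi * (inner ℝ ξ x : ℝ) / r))
      = {e : Euc n | ∃ e₁ ∈ periodGroup p,
          (inner ℝ ξ e₁ : ℝ) = 0 ∧ ∃ k : ℤ, e = e₁ + k • e₀} ∧
    periodGroup (fun x : Euc n =>
        m + w x + δ / 2 * Real.sin (2 * Real.pi * (inner ℝ ξ x : ℝ) / r))
      = periodGroup p ∧
    HasMeanValue (fun x : Euc n =>
        m + w x + δ / 2 * Real.sin (2 * Real.pi * (inner ℝ ξ x : ℝ) / r)) m := by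
  have hr0 : (r : ℝ) ≠ 0 := Nat.cast_ne_zero.2 hr.ne'
  have hinv := add_smul_invariant_of_proj_invariant hr0 he₀r hwproj
  have hperiods : periodGroup (fun x => m + w x + δ / 2 * sin (2 * π * ⟪ξ, x⟫ / r))
      = {e | ∃ e₁ ∈ periodGroup p, ⟪ξ, e₁⟫ = 0 ∧ ∃ k : ℤ, e = e₁ + k • e₀} := by
    rw [periodGroup_eq_of_continuous (by fun_prop)]
    ext e
    rw [mem_ofPred_eq, forall_add_mul_sin_periodic_iff hr0 he₀r hinv m hδ.ne',
      ← mem_ofPred (p := fun e => ∀ x, w (x + e) = w x), hwper]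
    exact exists_ker_add_real_smul_and_inner_iff hr0 he₀r _ e
  have hG : ∀ e ∈ periodGroup p, ∃ k : ℤ, ⟪ξ, e⟫ = r * k := fun e he =>
    hrange.subset (mem_image_of_mem _ he)
  refine ⟨hperiods,
    hperiods.trans ((periodSubgroup p).eq_setOf_ker_add_zsmul he₀ he₀r hG), ?_⟩
  have hsin : HasMeanValue (fun x => δ / 2 * sin (2 * π * ⟪ξ, x⟫ / r)) 0 :=
    hasMeanValue_zero_of_odd fun x => by
      rw [inner_neg_right, mul_neg, neg_div, sin_neg, mul_neg]
  simpa only [add_zero] using ((hasMeanValue_const m).add hwmean (locallyIntegrable_const m)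
    hw.locallyIntegrable).add hsin (continuous_const.add hw).locallyIntegrable
    (Continuous.locallyIntegrable (by fun_prop))

/-- the counterexample initial data
`u₀(x) = m + v(pr(x)) + (δ/2) sin(2π ξ·x / r)` (where `pr` is the projection
onto the hyperplane `E = ker ξ` along `e₀`, formalized via the function
`w = v ∘ pr` on ℝⁿ, constant along `e₀`, with group of periods exactly
`G₁ + ℝe₀` and zero mean) has group of periods exactly `G = G₁ + ℤe₀` and
mean value `m`. -/
theorem counterexample_initial_data
    {n : ℕ} (p : Euc n → ℝ)
    (hpm : Measurable p) (hpb : ∃ C : ℝ, ∀ x, |p x| ≤ C)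
    (hper : IsPeriodicFun p)
    (ξ : Euc n) (hξG : ξ ∈ dualGroup (periodGroup p)) (hξ0 : ξ ≠ 0)
    (r : ℕ) (hr : 0 < r)
    (hrange : (fun e => (inner ℝ ξ e : ℝ)) '' periodGroup p
      = {s : ℝ | ∃ k : ℤ, s = (r : ℝ) * k})
    (e₀ : Euc n) (he₀ : e₀ ∈ periodGroup p) (he₀r : (inner ℝ ξ e₀ : ℝ) = r)
    (w : Euc n → ℝ) (hw : Continuous w)
    -- `w = v ∘ pr`: `w` is invariant under the projection onto `E` along `e₀`
    (hwproj : ∀ x : Euc n, w (x - ((inner ℝ ξ x : ℝ) / r) • e₀) = w x)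
    -- the group of periods of `w` is exactly `G₁ ⊕ ℝe₀`, i.e. the group of
    -- periods of `v` on `E` is exactly `G₁ = ker ξ ∩ G`
    (hwper : {e : Euc n | ∀ x, w (x + e) = w x}
      = {e : Euc n | ∃ e₁ ∈ periodGroup p,
          (inner ℝ ξ e₁ : ℝ) = 0 ∧ ∃ t : ℝ, e = e₁ + t • e₀})
    -- `v` has zero mean value
    (hwmean : HasMeanValue w 0)
    (m δ : ℝ) (hδ : 0 < δ) :
    periodGroup (fun x : Euc n =>
        m + w x + δ / 2 * Real.sin (2 * Real.pi * (inner ℝ ξ x : ℝ) / r))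
      = {e : Euc n | ∃ e₁ ∈ periodGroup p,
          (inner ℝ ξ e₁ : ℝ) = 0 ∧ ∃ k : ℤ, e = e₁ + k • e₀} ∧
    periodGroup (fun x : Euc n =>
        m + w x + δ / 2 * Real.sin (2 * Real.pi * (inner ℝ ξ x : ℝ) / r))
      = periodGroup p ∧
    HasMeanValue (fun x : Euc n =>
        m + w x + δ / 2 * Real.sin (2 * Real.pi * (inner ℝ ξ x : ℝ) / r)) m :=
  counterexample_initial_data_general p ξ r hr hrange e₀ he₀ he₀r w hw hwproj hwper hwmean m δ hδ

end
end
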